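/- Let A be a real tensor of size n×n×n₃ that is invertible with inverse A⁻¹ (i.e. A*A⁻¹ = A⁻¹*A = 𝓘), and let E be a tensor of size n×n×n₃ with ‖A⁻¹‖₂·‖E‖₂ < 1. Then the entrywise sum A+E is invertible, i.e. there exists a tensor C of size n×n×n₃ with (A+E)*C = C*(A+E) = 𝓘. -/

import Mathlib

open scoped Matrix.Norms.L2Operator

noncomputable section

/-- The t-product of third-order tensors. -/
def tProd {n₁ n₂ n₃ n₄ : ℕ} [NeZero n₃] (A : Fin n₁ → Fin n₂ → ZMod n₃ → ℝ)
    (B : Fin n₂ → Fin n₄ → ZMod n₃ → ℝ) : Fin n₁ → Fin n₄ → ZMod n₃ → ℝ :=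
  fun i j k => ∑ l : Fin n₂, ∑ m : ZMod n₃, A i l (k - m) * B l j m

/-- The Frobenius norm of a third-order tensor. -/
def frobNorm {n₁ n₂ n₃ : ℕ} [NeZero n₃] (A : Fin n₁ → Fin n₂ → ZMod n₃ → ℝ) : ℝ :=
  Real.sqrt (∑ i : Fin n₁, ∑ j : Fin n₂, ∑ k : ZMod n₃, (A i j k) ^ 2)

/-- The block circulant matrix of a third-order tensor. -/
def bcirc {n₁ n₂ n₃ : ℕ} (A : Fin n₁ → Fin n₂ → ZMod n₃ → ℝ) :
    Matrix (Fin n₁ × ZMod n₃) (Fin n₂ × ZMod n₃) ℝ :=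
  fun p q => A p.1 q.1 (p.2 - q.2)

/-- The spectral norm of a third-order tensor: the L2 operator norm of its
block circulant matrix. -/
def specNorm {n₁ n₂ n₃ : ℕ} [NeZero n₃] (A : Fin n₁ → Fin n₂ → ZMod n₃ → ℝ) : ℝ :=
  ‖bcirc A‖

/-- The identity tensor. -/
def tId (n n₃ : ℕ) : Fin n → Fin n → ZMod n₃ → ℝ :=
  fun i j k => if i = j ∧ k = 0 then 1 else 0

/-- The tensor transpose. -/
def tTrans {n₁ n₂ n₃ : ℕ} (A : Fin n₁ → Fin n₂ → ZMod n₃ → ℝ) :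
    Fin n₂ → Fin n₁ → ZMod n₃ → ℝ :=
  fun i j k => A j i (-k)

/-- `X` is a Moore-Penrose inverse of `A`. -/
def IsMPInv {n₁ n₂ n₃ : ℕ} [NeZero n₃] (A : Fin n₁ → Fin n₂ → ZMod n₃ → ℝ)
    (X : Fin n₂ → Fin n₁ → ZMod n₃ → ℝ) : Prop :=
  tProd (tProd A X) A = A ∧ tProd (tProd X A) X = X ∧
    tTrans (tProd A X) = tProd A X ∧ tTrans (tProd X A) = tProd X A

/-- The `i`-th DFT block of a third-order tensor. -/
def dftBlock {n₁ n₂ n₃ : ℕ} [NeZero n₃] (A : Fin n₁ → Fin n₂ → ZMod n₃ → ℝ) (i : ZMod n₃) :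
    Matrix (Fin n₁) (Fin n₂) ℂ :=
  fun p q => ∑ k : ZMod n₃,
    Complex.exp (-2 * Real.pi * Complex.I * (i.val : ℂ) * (k.val : ℂ) / (n₃ : ℂ)) * (A p q k : ℂ)

end

/-!
`bcirc` turns the t-product into matrix multiplication, sends `tId` to `1` and is injective, so
the square tensors form, through `bcirc`, a finite-dimensional subalgebra of the matrix algebra.
In a finite-dimensional (hence Artinian) algebra an element that is not a zero divisor is a unit,
so a tensor whose block circulant matrix is invertible already has a t-product inverse.
Finally `bcirc (A + E) = bcirc A * (1 + bcirc A⁻¹ * bcirc E)` is invertible by the Neumann series,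
since `‖bcirc A⁻¹ * bcirc E‖ ≤ ‖A⁻¹‖₂ ‖E‖₂ < 1`.
-/

theorem Subalgebra.isUnit_of_isUnit_coe {K A : Type*} [Field K] [Ring A] [Algebra K A]
    (S : Subalgebra K A) [FiniteDimensional K S] {s : S} (hs : IsUnit (s : A)) : IsUnit s := by
  have : IsArtinianRing S := isArtinian_of_tower K inferInstance
  exact IsArtinianRing.isUnit_of_mem_nonZeroDivisors <|
    comap_nonZeroDivisors_le_of_injective (f := S.val) Subtype.val_injective hs.mem_nonZeroDivisors

theorem isUnit_add_of_norm_mul_norm_lt_one {R : Type*} [NormedRing R] [HasSummableGeomSeries R]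
    {a b e : R} (hab : a * b = 1) (hba : b * a = 1) (h : ‖b‖ * ‖e‖ < 1) : IsUnit (a + e) := by
  have hbe : ‖-(b * e)‖ < 1 := (norm_neg (b * e)).trans_lt ((norm_mul_le b e).trans_lt h)
  have hfactor : a + e = a * (1 - -(b * e)) := by
    rw [sub_neg_eq_add, mul_add, mul_one, ← mul_assoc, hab, one_mul]
  rw [hfactor]
  exact (⟨a, b, hab, hba⟩ : Rˣ).isUnit.mul (Units.oneSub _ hbe).isUnit

section Bcirc

variable {n₁ n₂ n₃ n₄ : ℕ}

theorem bcirc_add (A B : Fin n₁ → Fin n₂ → ZMod n₃ → ℝ) : bcirc (A + B) = bcirc A + bcirc B :=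
  rfl

theorem bcirc_smul (r : ℝ) (A : Fin n₁ → Fin n₂ → ZMod n₃ → ℝ) : bcirc (r • A) = r • bcirc A :=
  rfl

theorem bcirc_injective :
    Function.Injective (bcirc : (Fin n₁ → Fin n₂ → ZMod n₃ → ℝ) → _) := by
  intro A B h
  funext i j k
  simpa [bcirc] using congrFun (congrFun h (i, k)) (j, 0)

theorem bcirc_tProd [NeZero n₃] (A : Fin n₁ → Fin n₂ → ZMod n₃ → ℝ)
    (B : Fin n₂ → Fin n₄ → ZMod n₃ → ℝ) : bcirc (tProd A B) = bcirc A * bcirc B := by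
  ext ⟨i, k⟩ ⟨j, m⟩
  simp only [bcirc, tProd, Matrix.mul_apply, Fintype.sum_prod_type]
  refine Finset.sum_congr rfl fun l _ => Fintype.sum_equiv (Equiv.addRight m) _ _ fun q => ?_
  rw [Equiv.coe_addRight, add_sub_cancel_right, sub_sub, add_comm]

theorem bcirc_tId (n n₃ : ℕ) : bcirc (tId n n₃) = 1 := by
  ext ⟨i, k⟩ ⟨j, m⟩
  simp only [bcirc, tId, Matrix.one_apply, Prod.mk.injEq, sub_eq_zero]

end Bcirc

def bcircSubalgebra (n n₃ : ℕ) [NeZero n₃] :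
    Subalgebra ℝ (Matrix (Fin n × ZMod n₃) (Fin n × ZMod n₃) ℝ) where
  carrier := Set.range bcirc
  mul_mem' := by
    rintro _ _ ⟨A, rfl⟩ ⟨B, rfl⟩
    exact ⟨tProd A B, bcirc_tProd A B⟩
  add_mem' := by
    rintro _ _ ⟨A, rfl⟩ ⟨B, rfl⟩
    exact ⟨A + B, bcirc_add A B⟩
  algebraMap_mem' r :=
    ⟨r • tId n n₃, by rw [bcirc_smul, bcirc_tId, Algebra.algebraMap_eq_smul_one]⟩

theorem exists_tProd_inv_of_isUnit_bcirc {n n₃ : ℕ} [NeZero n₃] (T : Fin n → Fin n → ZMod n₃ → ℝ)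
    (hT : IsUnit (bcirc T)) :
    ∃ C : Fin n → Fin n → ZMod n₃ → ℝ, tProd T C = tId n n₃ ∧ tProd C T = tId n n₃ := by
  obtain ⟨u, hu⟩ := (bcircSubalgebra n n₃).isUnit_of_isUnit_coe (s := ⟨bcirc T, T, rfl⟩) hT
  obtain ⟨C, hC⟩ := (↑u⁻¹ : bcircSubalgebra n n₃).property
  have hTu : bcirc T = ((u : bcircSubalgebra n n₃) : Matrix _ _ ℝ) := by rw [hu]
  refine ⟨C, bcirc_injective ?_, bcirc_injective ?_⟩
  · rw [bcirc_tProd, bcirc_tId, hC, hTu, ← Subalgebra.coe_mul, u.mul_inv, Subalgebra.coe_one]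
  · rw [bcirc_tProd, bcirc_tId, hC, hTu, ← Subalgebra.coe_mul, u.inv_mul, Subalgebra.coe_one]

theorem perturbed_tensor_invertible_general (n n₃ : ℕ) [NeZero n₃]
    (A Ainv E : Fin n → Fin n → ZMod n₃ → ℝ)
    (hA₁ : tProd A Ainv = tId n n₃) (hA₂ : tProd Ainv A = tId n n₃)
    (hE : specNorm Ainv * specNorm E < 1) :
    ∃ C : Fin n → Fin n → ZMod n₃ → ℝ,
      tProd (A + E) C = tId n n₃ ∧ tProd C (A + E) = tId n n₃ := by
  apply exists_tProd_inv_of_isUnit_bcirc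
  rw [bcirc_add]
  refine isUnit_add_of_norm_mul_norm_lt_one ?_ ?_ hE
  · rw [← bcirc_tProd, hA₁, bcirc_tId]
  · rw [← bcirc_tProd, hA₂, bcirc_tId]

theorem perturbed_tensor_invertible (n n₃ : ℕ) [NeZero n₃] (hn : 0 < n)
    (A Ainv E : Fin n → Fin n → ZMod n₃ → ℝ)
    (hA₁ : tProd A Ainv = tId n n₃) (hA₂ : tProd Ainv A = tId n n₃)
    (hE : specNorm Ainv * specNorm E < 1) :
    ∃ C : Fin n → Fin n → ZMod n₃ → ℝ,
      tProd (A + E) C = tId n n₃ ∧ tProd C (A + E) = tId n n₃ :=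
  perturbed_tensor_invertible_general n n₃ A Ainv E hA₁ hA₂ hE
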